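/- Let E be a finite-dimensional real inner product space, g : ℝ → ℝ a function, and Ψ : ℝ × E × E → ℝ twice continuously differentiable with Ψ(t,x,v) > 0 for all (t,x,v), satisfying the PDE ∂Ψ/∂t = −(1/2)·g(t)²·Δ_v Ψ − ⟪∇_x Ψ, v⟫ at every (t,x,v). Then y := log ∘ Ψ satisfies, for all (t,x,v), ∂y/∂t(t,x,v) = −⟪v, ∇_x y(t,x,v)⟫ − (1/2)·g(t)²·(Δ_v y(t,x,v) + ‖∇_v y(t,x,v)‖²). -/

import Mathlib

open scoped Gradient RealInnerProductSpace

/-!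
Since `∇ log Ψ = ∇Ψ / Ψ` and `∇² log Ψ = ∇²Ψ / Ψ - ∇Ψ ⊗ ∇Ψ / Ψ²`, taking the trace in `v` gives
the Hopf–Cole identity `Δ_v log Ψ + ‖∇_v log Ψ‖² = Δ_v Ψ / Ψ`. Dividing the linear PDE for `Ψ` by
`Ψ` and using `∂ₜ log Ψ = ∂ₜΨ / Ψ`, `∇_x log Ψ = ∇_x Ψ / Ψ` turns it into the equation for `log Ψ`.
-/

/-- The Laplacian of `f : E → ℝ` at `x`: the trace of the second derivative, computed as the sum
of the second derivative evaluated along an orthonormal basis. -/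
noncomputable def laplacian {E : Type*} [NormedAddCommGroup E] [InnerProductSpace ℝ E]
    [FiniteDimensional ℝ E] (f : E → ℝ) (x : E) : ℝ :=
  ∑ i, iteratedFDeriv ℝ 2 f x ![stdOrthonormalBasis ℝ E i, stdOrthonormalBasis ℝ E i]

section LogComp

variable {E : Type*} [NormedAddCommGroup E] [InnerProductSpace ℝ E]

theorem gradient_log [CompleteSpace E] {f : E → ℝ} {x : E} (hf : DifferentiableAt ℝ f x)
    (hx : f x ≠ 0) : ∇ (fun w => Real.log (f w)) x = (f x)⁻¹ • ∇ f x := by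
  simp only [gradient, fderiv.log hf hx, map_smul]

theorem fderiv_fderiv_log_apply {f : E → ℝ} (hf : ContDiff ℝ 2 f) (hf0 : ∀ w, f w ≠ 0)
    (x u v : E) :
    fderiv ℝ (fderiv ℝ (fun w => Real.log (f w))) x u v
      = (f x)⁻¹ * fderiv ℝ (fderiv ℝ f) x u v
        - (f x ^ 2)⁻¹ * (fderiv ℝ f x u * fderiv ℝ f x v) := by
  have hdf : Differentiable ℝ f := hf.differentiable two_ne_zero
  have hdf' : Differentiable ℝ (fderiv ℝ f) :=
    (hf.fderiv_right (m := 1) le_rfl).differentiable one_ne_zero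
  have hfderiv_log : fderiv ℝ (fun w => Real.log (f w)) = fun w => (f w)⁻¹ • fderiv ℝ f w :=
    funext fun w => fderiv.log (hdf w) (hf0 w)
  have hinv : HasFDerivAt (fun w => (f w)⁻¹) (-(f x ^ 2)⁻¹ • fderiv ℝ f x) x :=
    (hasDerivAt_inv (hf0 x)).comp_hasFDerivAt x (hdf x).hasFDerivAt
  rw [hfderiv_log, fderiv_fun_smul hinv.differentiableAt (hdf' x), hinv.fderiv]
  simp only [add_apply, smul_apply, ContinuousLinearMap.smulRight_apply,
    smul_eq_mul]
  ring

variable [FiniteDimensional ℝ E]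

theorem laplacian_eq_sum_fderiv_fderiv (f : E → ℝ) (x : E) :
    laplacian f x = ∑ i, fderiv ℝ (fderiv ℝ f) x (stdOrthonormalBasis ℝ E i)
      (stdOrthonormalBasis ℝ E i) := by
  simp only [laplacian, iteratedFDeriv_two_apply, Matrix.cons_val_zero, Matrix.cons_val_one,
]

theorem sum_fderiv_orthonormalBasis_sq {ι : Type*} [Fintype ι] (b : OrthonormalBasis ι ℝ E)
    (f : E → ℝ) (x : E) : ∑ i, fderiv ℝ f x (b i) ^ 2 = ‖∇ f x‖ ^ 2 := by
  simp only [← inner_gradient_left, b.sum_sq_inner_left]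

theorem laplacian_log {f : E → ℝ} (hf : ContDiff ℝ 2 f) (hf0 : ∀ w, f w ≠ 0) (x : E) :
    laplacian (fun w => Real.log (f w)) x
      = (f x)⁻¹ * laplacian f x - (f x ^ 2)⁻¹ * ‖∇ f x‖ ^ 2 := by
  simp only [laplacian_eq_sum_fderiv_fderiv, fderiv_fderiv_log_apply hf hf0, ← sq,
    Finset.sum_sub_distrib, ← Finset.mul_sum, sum_fderiv_orthonormalBasis_sq]

theorem laplacian_log_add_norm_gradient_log_sq {f : E → ℝ} (hf : ContDiff ℝ 2 f)
    (hf0 : ∀ w, f w ≠ 0) (x : E) :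
    laplacian (fun w => Real.log (f w)) x + ‖∇ (fun w => Real.log (f w)) x‖ ^ 2
      = laplacian f x / f x := by
  have hx := hf0 x
  rw [laplacian_log hf hf0, gradient_log (hf.differentiable two_ne_zero x) hx, norm_smul,
    mul_pow, norm_inv, Real.norm_eq_abs, inv_pow, sq_abs]
  field_simp
  ring

end LogComp

/-- The forward log-potential `y = log Ψ` solves the phase-space HJB-type equation. -/
theorem log_potential_forward_pde {E : Type*} [NormedAddCommGroup E]
    [InnerProductSpace ℝ E] [FiniteDimensional ℝ E]
    (g : ℝ → ℝ) (Ψ : ℝ → E → E → ℝ)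
    (hΨ : ContDiff ℝ 2 fun p : ℝ × E × E => Ψ p.1 p.2.1 p.2.2)
    (hΨpos : ∀ (t : ℝ) (x v : E), 0 < Ψ t x v)
    (hPDE : ∀ (t : ℝ) (x v : E),
      deriv (fun s => Ψ s x v) t
        = -(1/2) * g t ^ 2 * laplacian (fun w => Ψ t x w) v
          - ⟪∇ (fun y => Ψ t y v) x, v⟫) :
    ∀ (t : ℝ) (x v : E),
      deriv (fun s => Real.log (Ψ s x v)) t
        = -⟪v, ∇ (fun y => Real.log (Ψ t y v)) x⟫
          - (1/2) * g t ^ 2 * (laplacian (fun w => Real.log (Ψ t x w)) v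
              + ‖∇ (fun w => Real.log (Ψ t x w)) v‖ ^ 2) := by
  intro t x v
  have hΨ0 : Ψ t x v ≠ 0 := (hΨpos t x v).ne'
  have hΨt : ContDiff ℝ 2 fun s => Ψ s x v :=
    hΨ.comp (by fun_prop : ContDiff ℝ 2 fun s : ℝ => (s, x, v))
  have hΨx : ContDiff ℝ 2 fun y => Ψ t y v :=
    hΨ.comp (by fun_prop : ContDiff ℝ 2 fun y : E => (t, y, v))
  have hΨv : ContDiff ℝ 2 fun w => Ψ t x w :=
    hΨ.comp (by fun_prop : ContDiff ℝ 2 fun w : E => (t, x, w))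
  rw [deriv.log (hΨt.differentiable two_ne_zero t) hΨ0, hPDE,
    gradient_log (hΨx.differentiable two_ne_zero x) hΨ0,
    laplacian_log_add_norm_gradient_log_sq hΨv fun w => (hΨpos t x w).ne',
    inner_smul_right, real_inner_comm]
  field_simp
  ring
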